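/- Let n ≥ 1, let M be a positive semidefinite complex matrix indexed by (Fin n × Fin n), and suppose 0 ≤ s is such that (e ⊗ f)ᴴ M (e ⊗ f) ≤ s for all unit vectors e, f ∈ ℂⁿ. If additionally n = 2^p for some p : ℕ, then for every unit vector ψ : Fin n × Fin n → ℂ one has ψᴴ M ψ ≤ 2^{2p} · s. -/

import Mathlib

open Matrix
open scoped ComplexOrder

/-!
A positive semidefinite matrix is a Gram matrix, so by Cauchy–Schwarz each entry satisfies
`|M q q'|² ≤ M q q · M q' q'`. Every diagonal entry is the value of the quadratic form on a
product of basis vectors, hence at most `s`, so every entry is bounded by `s`. Then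
`ψᴴ M ψ ≤ s (∑ |ψ q|)² ≤ s · n² · ∑ |ψ q|² = n² s`.
-/

namespace Matrix

variable {𝕜 ι : Type*} [RCLike 𝕜] [Fintype ι]

open RCLike in
lemma PosSemidef.norm_apply_mul_norm_apply_le [DecidableEq ι] {A : Matrix ι ι 𝕜}
    (hA : A.PosSemidef) (i j : ι) :
    ‖A i j‖ * ‖A j i‖ ≤ re (A i i) * re (A j j) := by
  let _ := A.toSeminormedAddCommGroup hA
  let _ := A.toInnerProductSpace hA
  have hinner : ∀ k l, inner 𝕜 (Pi.single k 1 : ι → 𝕜) (Pi.single l 1) = A k l := fun k l => by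
    change A *ᵥ Pi.single l 1 ⬝ᵥ star (Pi.single k 1 : ι → 𝕜) = A k l
    simp [dotProduct_single]
  simpa only [hinner] using inner_mul_inner_self_le (𝕜 := 𝕜) (Pi.single i 1 : ι → 𝕜) (Pi.single j 1)

lemma PosSemidef.norm_apply_le_of_re_diag_le {A : Matrix ι ι 𝕜} (hA : A.PosSemidef) {s : ℝ}
    (hdiag : ∀ i, RCLike.re (A i i) ≤ s) (i j : ι) : ‖A i j‖ ≤ s := by
  classical
  have hii : 0 ≤ RCLike.re (A i i) := (RCLike.nonneg_iff.1 hA.diag_nonneg).1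
  have hjj : 0 ≤ RCLike.re (A j j) := (RCLike.nonneg_iff.1 hA.diag_nonneg).1
  have hs : 0 ≤ s := hii.trans (hdiag i)
  refine (pow_le_pow_iff_left₀ (norm_nonneg _) hs two_ne_zero).1 ?_
  calc ‖A i j‖ ^ 2 = ‖A i j‖ * ‖A j i‖ := by
        rw [sq, ← hA.isHermitian.apply i j, norm_star]
    _ ≤ RCLike.re (A i i) * RCLike.re (A j j) := hA.norm_apply_mul_norm_apply_le i j
    _ ≤ s ^ 2 := by rw [sq]; exact mul_le_mul (hdiag i) (hdiag j) hjj hs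

lemma re_star_dotProduct_mulVec_le (A : Matrix ι ι 𝕜) {s : ℝ} (hA : ∀ i j, ‖A i j‖ ≤ s)
    (x : ι → 𝕜) : RCLike.re (star x ⬝ᵥ A *ᵥ x) ≤ s * (∑ i, ‖x i‖) ^ 2 :=
  calc RCLike.re (star x ⬝ᵥ A *ᵥ x) ≤ ‖star x ⬝ᵥ A *ᵥ x‖ := RCLike.re_le_norm _
    _ = ‖∑ i, ∑ j, star (x i) * (A i j * x j)‖ := by
        simp only [dotProduct, mulVec, Finset.mul_sum, Pi.star_apply]
    _ ≤ ∑ i, ∑ j, ‖x i‖ * (s * ‖x j‖) := by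
        refine (norm_sum_le _ _).trans (Finset.sum_le_sum fun i _ => ?_)
        refine (norm_sum_le _ _).trans (Finset.sum_le_sum fun j _ => ?_)
        rw [norm_mul, norm_mul, norm_star]
        gcongr
        exact hA i j
    _ = s * (∑ i, ‖x i‖) ^ 2 := by
        rw [sq, Finset.sum_mul_sum, Finset.mul_sum]
        exact Finset.sum_congr rfl fun i _ => by rw [Finset.mul_sum]; ring_nf

end Matrix

lemma sum_norm_single_one_sq {𝕜 ι : Type*} [RCLike 𝕜] [Fintype ι] [DecidableEq ι] (i : ι) :
    ∑ k, ‖(Pi.single i 1 : ι → 𝕜) k‖ ^ 2 = 1 := by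
  simp [Pi.single_apply, apply_ite]

lemma single_one_mul_single_one {R ι κ : Type*} [MulZeroOneClass R] [DecidableEq ι]
    [DecidableEq κ] (i : ι) (j : κ) :
    (fun q : ι × κ => (Pi.single i 1 : ι → R) q.1 * (Pi.single j 1 : κ → R) q.2) =
      Pi.single (i, j) 1 := by
  funext q
  simp only [Pi.single_apply, Prod.ext_iff, ite_zero_mul_ite_zero, one_mul]

theorem psd_product_bound_entangled_blowup_general
    (n : ℕ) (p : ℕ) (hnp : n = 2 ^ p)
    (M : Matrix (Fin n × Fin n) (Fin n × Fin n) ℂ) (hM : M.PosSemidef)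
    (s : ℝ) (hs : 0 ≤ s)
    (hprod : ∀ e f : Fin n → ℂ,
      (∑ i, ‖e i‖ ^ 2) = 1 → (∑ i, ‖f i‖ ^ 2) = 1 →
      (star (fun q : Fin n × Fin n => e q.1 * f q.2) ⬝ᵥ
        M *ᵥ (fun q : Fin n × Fin n => e q.1 * f q.2)).re ≤ s) :
    ∀ ψ : Fin n × Fin n → ℂ, (∑ q, ‖ψ q‖ ^ 2) = 1 →
      (star ψ ⬝ᵥ M *ᵥ ψ).re ≤ (2 : ℝ) ^ (2 * p) * s := by
  intro ψ hψ
  have hdiag : ∀ q, (M q q).re ≤ s := fun q => by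
    simpa [single_one_mul_single_one, dotProduct_single] using
      hprod _ _ (sum_norm_single_one_sq q.1) (sum_norm_single_one_sq q.2)
  calc (star ψ ⬝ᵥ M *ᵥ ψ).re ≤ s * (∑ q, ‖ψ q‖) ^ 2 :=
        M.re_star_dotProduct_mulVec_le (hM.norm_apply_le_of_re_diag_le hdiag) ψ
    _ ≤ s * (Finset.univ.card * ∑ q, ‖ψ q‖ ^ 2) := by gcongr; exact sq_sum_le_card_mul_sum_sq
    _ = (2 : ℝ) ^ (2 * p) * s := by
        rw [hψ, Finset.card_univ, Fintype.card_prod, Fintype.card_fin, hnp]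
        push_cast
        ring

/-- **Lemma (clonable-single-proof, quantitative core).** If `M` is a positive semidefinite
`n² × n²` complex matrix whose quadratic form on all product unit vectors `e ⊗ f` is at
most `s`, and `n = 2^p`, then for every unit vector `ψ : Fin n × Fin n → ℂ` one has
`ψᴴ M ψ ≤ 2^(2p) · s`. -/
theorem psd_product_bound_entangled_blowup
    (n : ℕ) (hn : 1 ≤ n) (p : ℕ) (hnp : n = 2 ^ p)
    (M : Matrix (Fin n × Fin n) (Fin n × Fin n) ℂ) (hM : M.PosSemidef)
    (s : ℝ) (hs : 0 ≤ s)
    (hprod : ∀ e f : Fin n → ℂ,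
      (∑ i, ‖e i‖ ^ 2) = 1 → (∑ i, ‖f i‖ ^ 2) = 1 →
      (star (fun q : Fin n × Fin n => e q.1 * f q.2) ⬝ᵥ
        M *ᵥ (fun q : Fin n × Fin n => e q.1 * f q.2)).re ≤ s) :
    ∀ ψ : Fin n × Fin n → ℂ, (∑ q, ‖ψ q‖ ^ 2) = 1 →
      (star ψ ⬝ᵥ M *ᵥ ψ).re ≤ (2 : ℝ) ^ (2 * p) * s :=
  psd_product_bound_entangled_blowup_general n p hnp M hM s hs hprod
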